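/- For every C > 0, α ∈ [0,1), β ∈ [0,1/2), and every function ε: ℕ × (0,1] → [0,∞) with ε(T,δ) → 0 as T → ∞ for each fixed δ, there exist T, probability distributions P and Q on {0,1,2}^T, a Q-optimal prediction policy, and δ ∈ (0,1) such that with probability at least δ under P, the average per-round regret Δ (with classification loss) satisfies both Δ ≥ C·V_T·δ^{−α} + ε(T,δ) and Δ ≥ C·sqrt(KL(P‖Q)/T)·δ^{−β} + ε(T,δ). -/

import Mathlib

/-!
Under `Q` the first symbol is a rare trap `2` (probability `δ`), followed by fair coin flips on
`{0, 1}`; `P` agrees with `Q` except that after the trap it emits `1` forever. Always predicting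
`0` is `Q`-optimal, but on the trap path `(2, 1, …, 1)`, of `P`-probability `δ`, it loses every
round while the `P`-optimal comparator loses only the first, so the regret is `(T - 1) / T`.
Since `P` and `Q` differ only on the trap event, `V_T ≤ δ` and `KL(P‖Q) ≤ δ T`, so the two
right-hand sides are at most `C δ^(1 - α) + ε(T, δ)` and `C δ^(1/2 - β) + ε(T, δ)`: small for `δ`
small and then `T` large.
-/

open scoped Classical

open Finset Filter Topology Real

section ZeroOneLoss

variable {α : Type*} [Fintype α] [DecidableEq α]

lemma sum_mul_zeroOneLoss (p : α → ℝ) (b : α) :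
    ∑ z, p z * (if b = z then (0 : ℝ) else 1) = ∑ z, p z - p b := by
  have hterm (z : α) : p z * (if b = z then 0 else 1) = p z - if b = z then p z else 0 := by
    split_ifs <;> ring
  rw [sum_congr rfl fun z _ => hterm z, sum_sub_distrib, sum_ite_eq, if_pos (mem_univ b)]

lemma zeroOneLoss_le_of_forall_le {p : α → ℝ} {b : α} (hb : ∀ b', p b' ≤ p b) (b' : α) :
    ∑ z, p z * (if b = z then (0 : ℝ) else 1) ≤ ∑ z, p z * (if b' = z then (0 : ℝ) else 1) := by
  simpa only [sum_mul_zeroOneLoss] using sub_le_sub_left (hb b') _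

end ZeroOneLoss

noncomputable def tvDist {α : Type*} [Fintype α] (p q : α → ℝ) : ℝ := (1 / 2) * ∑ z, |p z - q z|

lemma tvDist_le_one {α : Type*} [Fintype α] {p q : α → ℝ}
    (hp : p ∈ stdSimplex ℝ α) (hq : q ∈ stdSimplex ℝ α) : tvDist p q ≤ 1 := by
  have hsum : ∑ z, |p z - q z| ≤ ∑ z, (p z + q z) := sum_le_sum fun z _ => by
    simpa only [abs_of_nonneg (hp.1 z), abs_of_nonneg (hq.1 z)] using abs_sub (p z) (q z)
  rw [sum_add_distrib, hp.2, hq.2] at hsum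
  unfold tvDist
  linarith

section PathLaws

variable {T : ℕ} {α : Type*}

def prefixAt (x : Fin T → α) (t : Fin T) : Fin t.val → α := fun i => x ⟨i.val, i.isLt.trans t.isLt⟩

def pathProb (κ : (t : Fin T) → (Fin t.val → α) → α → ℝ) (x : Fin T → α) : ℝ :=
  ∏ t, κ t (prefixAt x t) (x t)

lemma pathProb_nonneg {κ : (t : Fin T) → (Fin t.val → α) → α → ℝ}
    (hκ : ∀ t pfx z, 0 ≤ κ t pfx z) (x : Fin T → α) : 0 ≤ pathProb κ x :=
  prod_nonneg fun t _ => hκ t _ _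

@[to_additive]
lemma prod_ite_val_eq_zero {M : Type*} [CommMonoid M] (n : ℕ) (a b : M) :
    ∏ t : Fin (n + 1), (if t.val = 0 then a else b) = a * b ^ n := by
  simp [Fin.prod_univ_succ]

end PathLaws

namespace TrapInstance

variable {T n : ℕ} {δ : ℝ}

def firstLaw (δ : ℝ) : Fin 3 → ℝ := ![1 - δ, 0, δ]

noncomputable def coinLaw : Fin 3 → ℝ := ![1 / 2, 1 / 2, 0]

def diracOne : Fin 3 → ℝ := ![0, 1, 0]

lemma firstLaw_mem_stdSimplex (h0 : 0 ≤ δ) (h1 : δ ≤ 1) : firstLaw δ ∈ stdSimplex ℝ (Fin 3) := by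
  refine ⟨fun z => ?_, ?_⟩
  · fin_cases z <;> simp [firstLaw] <;> linarith
  · simp [firstLaw, Fin.sum_univ_three]

lemma coinLaw_mem_stdSimplex : coinLaw ∈ stdSimplex ℝ (Fin 3) := by
  refine ⟨fun z => ?_, ?_⟩
  · fin_cases z <;> simp [coinLaw]
  · simp [coinLaw, Fin.sum_univ_three]; norm_num

lemma diracOne_mem_stdSimplex : diracOne ∈ stdSimplex ℝ (Fin 3) := by
  refine ⟨fun z => ?_, ?_⟩
  · fin_cases z <;> simp [diracOne]
  · simp [diracOne, Fin.sum_univ_three]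

lemma firstLaw_le_zero (h : δ ≤ 1 / 2) (z : Fin 3) : firstLaw δ z ≤ firstLaw δ 0 := by
  fin_cases z <;> simp [firstLaw] <;> linarith

lemma coinLaw_le_zero (z : Fin 3) : coinLaw z ≤ coinLaw 0 := by
  fin_cases z <;> simp [coinLaw]

lemma diracOne_le_one (z : Fin 3) : diracOne z ≤ diracOne 1 := by
  fin_cases z <;> simp [diracOne]

noncomputable def kernelQ (δ : ℝ) (t : Fin T) (_ : Fin t.val → Fin 3) : Fin 3 → ℝ :=
  if t.val = 0 then firstLaw δ else coinLaw

noncomputable def kernelP (δ : ℝ) (t : Fin T) (pfx : Fin t.val → Fin 3) : Fin 3 → ℝ :=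
  if ht : t.val = 0 then firstLaw δ
  else if pfx ⟨0, Nat.pos_of_ne_zero ht⟩ = 2 then diracOne else coinLaw

def policyP (t : Fin T) (pfx : Fin t.val → Fin 3) : Fin 3 :=
  if ht : t.val = 0 then 0 else if pfx ⟨0, Nat.pos_of_ne_zero ht⟩ = 2 then 1 else 0

def trapPath : Fin T → Fin 3 := fun t => if t.val = 0 then 2 else 1

lemma kernelQ_mem_stdSimplex (h0 : 0 ≤ δ) (h1 : δ ≤ 1) (t : Fin T) (pfx : Fin t.val → Fin 3) :
    kernelQ δ t pfx ∈ stdSimplex ℝ (Fin 3) := by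
  unfold kernelQ
  split_ifs
  exacts [firstLaw_mem_stdSimplex h0 h1, coinLaw_mem_stdSimplex]

lemma kernelP_mem_stdSimplex (h0 : 0 ≤ δ) (h1 : δ ≤ 1) (t : Fin T) (pfx : Fin t.val → Fin 3) :
    kernelP δ t pfx ∈ stdSimplex ℝ (Fin 3) := by
  unfold kernelP
  split_ifs
  exacts [firstLaw_mem_stdSimplex h0 h1, diracOne_mem_stdSimplex, coinLaw_mem_stdSimplex]

lemma kernelQ_le_zero (h : δ ≤ 1 / 2) (t : Fin T) (pfx : Fin t.val → Fin 3) (z : Fin 3) :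
    kernelQ δ t pfx z ≤ kernelQ δ t pfx 0 := by
  unfold kernelQ
  split_ifs
  exacts [firstLaw_le_zero h z, coinLaw_le_zero z]

lemma kernelP_le_policyP (h : δ ≤ 1 / 2) (t : Fin T) (pfx : Fin t.val → Fin 3) (z : Fin 3) :
    kernelP δ t pfx z ≤ kernelP δ t pfx (policyP t pfx) := by
  unfold kernelP policyP
  split_ifs
  exacts [firstLaw_le_zero h z, diracOne_le_one z, coinLaw_le_zero z]

lemma kernelP_eq_kernelQ {x : Fin (n + 1) → Fin 3} (hx : x 0 ≠ 2) (t : Fin (n + 1)) :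
    kernelP δ t (prefixAt x t) = kernelQ δ t (prefixAt x t) := by
  unfold kernelP kernelQ
  split_ifs with h0 h2
  · rfl
  · exact absurd h2 hx
  · rfl

lemma pathProb_kernelP_eq_zero {x : Fin (n + 1) → Fin 3} (hx0 : x 0 = 2) (hx : x ≠ trapPath) :
    pathProb (kernelP δ) x = 0 := by
  obtain ⟨t, ht⟩ := Function.ne_iff.mp hx
  have ht0 : t.val ≠ 0 := fun h => ht (by rw [show t = 0 from Fin.ext h, hx0]; rfl)
  have hxt : x t ≠ 1 := by simpa [trapPath, ht0] using ht
  refine prod_eq_zero (mem_univ t) ?_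
  simp only [kernelP, ht0, dite_false]
  rw [if_pos (show prefixAt x t ⟨0, _⟩ = 2 from hx0)]
  revert hxt
  generalize x t = z
  fin_cases z <;> simp [diracOne]

lemma pathProb_kernelP_trapPath :
    pathProb (kernelP δ) (trapPath : Fin (n + 1) → Fin 3) = δ := by
  have h (t : Fin (n + 1)) :
      kernelP δ t (prefixAt trapPath t) (trapPath t) = if t.val = 0 then δ else 1 := by
    unfold kernelP trapPath prefixAt
    split_ifs <;> simp_all [firstLaw, diracOne]
  simp only [pathProb, h, prod_ite_val_eq_zero, one_pow, mul_one]

lemma pathProb_kernelQ_trapPath :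
    pathProb (kernelQ δ) (trapPath : Fin (n + 1) → Fin 3) = δ * (1 / 2) ^ n := by
  have h (t : Fin (n + 1)) :
      kernelQ δ t (prefixAt trapPath t) (trapPath t) = if t.val = 0 then δ else 1 / 2 := by
    unfold kernelQ trapPath
    split_ifs <;> simp [firstLaw, coinLaw]
  simp only [pathProb, h, prod_ite_val_eq_zero]

-- On the trap event `x 0 = 2`, `P` charges only `trapPath`.
lemma sum_pathProb_kernelP_mul {g : (Fin (n + 1) → Fin 3) → ℝ} (hg : ∀ x, x 0 ≠ 2 → g x = 0) :
    ∑ x, pathProb (kernelP δ) x * g x = δ * g trapPath := by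
  rw [sum_eq_single trapPath, pathProb_kernelP_trapPath]
  · intro x _ hx
    by_cases hx0 : x 0 = 2
    · rw [pathProb_kernelP_eq_zero hx0 hx, zero_mul]
    · rw [hg x hx0, mul_zero]
  · simp

lemma sum_pathProb_mul_avg_tvDist_le (h0 : 0 ≤ δ) (h1 : δ ≤ 1) :
    ∑ x : Fin (n + 1) → Fin 3, pathProb (kernelP δ) x * ((1 / ((n + 1 : ℕ) : ℝ)) *
      ∑ t, tvDist (kernelP δ t (prefixAt x t)) (kernelQ δ t (prefixAt x t))) ≤ δ := by
  rw [sum_pathProb_kernelP_mul]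
  · have hsum : ∑ t : Fin (n + 1), tvDist (kernelP δ t (prefixAt trapPath t))
        (kernelQ δ t (prefixAt trapPath t)) ≤ ((n + 1 : ℕ) : ℝ) := by
      refine (sum_le_sum fun t _ => tvDist_le_one (kernelP_mem_stdSimplex h0 h1 t _)
        (kernelQ_mem_stdSimplex h0 h1 t _)).trans_eq ?_
      simp
    rw [one_div_mul_eq_div]
    exact mul_le_of_le_one_right h0 ((div_le_one (by positivity)).2 hsum)
  · intro x hx
    simp [kernelP_eq_kernelQ hx, tvDist]

lemma sum_pathProb_mul_log_le (hδ : 0 < δ) :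
    ∑ x : Fin (n + 1) → Fin 3, pathProb (kernelP δ) x *
      log (pathProb (kernelP δ) x / pathProb (kernelQ δ) x) ≤ δ * ((n + 1 : ℕ) : ℝ) := by
  push_cast
  rw [sum_pathProb_kernelP_mul, pathProb_kernelP_trapPath, pathProb_kernelQ_trapPath]
  · have hratio : δ / (δ * (1 / 2) ^ n) = 2 ^ n := by
      field_simp
      rw [← mul_pow]
      norm_num
    rw [hratio, log_pow]
    have := log_two_lt_d9
    gcongr
    nlinarith [n.cast_nonneg (α := ℝ)]
  · intro x hx
    have hPQ : pathProb (kernelP δ) x = pathProb (kernelQ δ) x :=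
      prod_congr rfl fun t _ => congrFun (kernelP_eq_kernelQ hx t) (x t)
    rw [hPQ, log_div_self]

lemma averageRegret_trapPath : (1 / ((n + 1 : ℕ) : ℝ)) * ∑ t : Fin (n + 1),
    ((if (0 : Fin 3) = trapPath t then (0 : ℝ) else 1) -
      (if policyP t (prefixAt trapPath t) = trapPath t then (0 : ℝ) else 1)) = n / (n + 1) := by
  have h (t : Fin (n + 1)) : ((if (0 : Fin 3) = trapPath t then (0 : ℝ) else 1) -
      (if policyP t (prefixAt trapPath t) = trapPath t then (0 : ℝ) else 1)) =
      if t.val = 0 then 0 else 1 := by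
    unfold policyP trapPath prefixAt
    split_ifs <;> simp_all
  simp only [h, sum_ite_val_eq_zero, nsmul_eq_mul, mul_one, zero_add]
  push_cast
  ring

end TrapInstance

lemma eventually_mul_rpow_lt {e : ℝ} (he : 0 < e) (C : ℝ) {c : ℝ} (hc : 0 < c) :
    ∀ᶠ δ in 𝓝[>] (0 : ℝ), C * δ ^ e < c := by
  have h := ((continuousAt_rpow_const 0 e (Or.inr he.le)).tendsto).const_mul C
  rw [zero_rpow he.ne', mul_zero] at h
  exact nhdsWithin_le_nhds (h.eventually (gt_mem_nhds hc))

lemma exists_mul_rpow_lt {a b : ℝ} (ha : 0 < a) (hb : 0 < b) (C : ℝ) {c : ℝ} (hc : 0 < c) :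
    ∃ δ, (0 < δ ∧ δ ≤ 1 / 2) ∧ C * δ ^ a < c ∧ C * δ ^ b < c := by
  obtain ⟨δ, ⟨hδa, hδb, hδh⟩, hδ0⟩ := ((eventually_mul_rpow_lt ha C hc).and
    ((eventually_mul_rpow_lt hb C hc).and (nhdsWithin_le_nhds (eventually_le_nhds one_half_pos))) |>.and
      self_mem_nhdsWithin).exists
  exact ⟨δ, ⟨hδ0, hδh⟩, hδa, hδb⟩

lemma mul_mul_rpow_neg_le {C V δ a b : ℝ} (hC : 0 ≤ C) (hδ : 0 < δ) (hV : V ≤ δ ^ a) :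
    C * V * δ ^ (-b) ≤ C * δ ^ (a - b) := by
  rw [sub_eq_add_neg, rpow_add hδ, ← mul_assoc]
  gcongr

open TrapInstance in
theorem stmt_18_general (C : ℝ) (hC : 0 < C) (α β : ℝ)
    (hα : α ∈ Set.Ico (0 : ℝ) 1) (hβ : β ∈ Set.Ico (0 : ℝ) (1 / 2))
    (ε : ℕ → ℝ → ℝ)
    (hεlim : ∀ δ ∈ Set.Ioc (0 : ℝ) 1,
      Filter.Tendsto (fun T => ε T δ) Filter.atTop (nhds 0)) :
    ∃ (T : ℕ) (_ : 0 < T)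
      (κ η : (t : Fin T) → (Fin t.val → Fin 3) → Fin 3 → ℝ)
      (bQ bP : (t : Fin T) → (Fin t.val → Fin 3) → Fin 3)
      (δ : ℝ), δ ∈ Set.Ioo (0 : ℝ) 1 ∧
      -- `κ` and `η` are Markov kernels
      (∀ t pfx z, 0 ≤ κ t pfx z) ∧ (∀ t pfx, ∑ z, κ t pfx z = 1) ∧
      (∀ t pfx z, 0 ≤ η t pfx z) ∧ (∀ t pfx, ∑ z, η t pfx z = 1) ∧
      -- `bQ` is Bayes optimal for `Q`, `bP` is Bayes optimal for `P` (classification loss)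
      (∀ t pfx b', ∑ z, η t pfx z * (if bQ t pfx = z then (0 : ℝ) else 1) ≤
        ∑ z, η t pfx z * (if b' = z then (0 : ℝ) else 1)) ∧
      (∀ t pfx b', ∑ z, κ t pfx z * (if bP t pfx = z then (0 : ℝ) else 1) ≤
        ∑ z, κ t pfx z * (if b' = z then (0 : ℝ) else 1)) ∧
      -- for `P`, `Q`, `Δ`, `V_T` and `KL` defined from the kernels and policies as usual,
      -- both regret lower bounds hold simultaneously with `P`-probability at least `δ`
      (∀ (P Q : (Fin T → Fin 3) → ℝ) (Δ : (Fin T → Fin 3) → ℝ)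
          (v : (Fin T → Fin 3) → Fin T → ℝ) (VT KL : ℝ),
        (∀ x, P x = ∏ t, κ t (fun i => x ⟨i.val, i.isLt.trans t.isLt⟩) (x t)) →
        (∀ x, Q x = ∏ t, η t (fun i => x ⟨i.val, i.isLt.trans t.isLt⟩) (x t)) →
        (∀ x, Δ x = (1 / (T : ℝ)) * ∑ t,
          ((if bQ t (fun i => x ⟨i.val, i.isLt.trans t.isLt⟩) = x t then (0 : ℝ) else 1)
            - (if bP t (fun i => x ⟨i.val, i.isLt.trans t.isLt⟩) = x t then (0 : ℝ) else 1))) →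
        (∀ x t, v x t = (1 / 2) * ∑ z,
          |κ t (fun i => x ⟨i.val, i.isLt.trans t.isLt⟩) z
            - η t (fun i => x ⟨i.val, i.isLt.trans t.isLt⟩) z|) →
        VT = (∑ x, P x * ((1 / (T : ℝ)) * ∑ t, v x t)) →
        KL = (∑ x, P x * Real.log (P x / Q x)) →
        δ ≤ ∑ x ∈ Finset.univ.filter (fun x : Fin T → Fin 3 =>
            C * VT * δ ^ (-α) + ε T δ ≤ Δ x ∧
            C * Real.sqrt (KL / T) * δ ^ (-β) + ε T δ ≤ Δ x), P x) := by
  obtain ⟨δ, ⟨hδ0, hδh⟩, hδα, hδβ⟩ :=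
    exists_mul_rpow_lt (sub_pos.2 hα.2) (sub_pos.2 hβ.2) C (by norm_num : (0 : ℝ) < 1 / 4)
  have hδ1 : δ < 1 := by linarith
  obtain ⟨n, hεn, hn⟩ := ((((hεlim δ ⟨hδ0, hδ1.le⟩).comp (tendsto_add_atTop_nat 1)).eventually
    (gt_mem_nhds (by norm_num : (0 : ℝ) < 1 / 4))).and (eventually_ge_atTop 3)).exists
  replace hεn : ε (n + 1) δ < 1 / 4 := hεn
  have hκ := kernelP_mem_stdSimplex (T := n + 1) hδ0.le hδ1.le
  have hη := kernelQ_mem_stdSimplex (T := n + 1) hδ0.le hδ1.le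
  refine ⟨n + 1, n.succ_pos, kernelP δ, kernelQ δ, fun _ _ => 0, policyP, δ, ⟨hδ0, hδ1⟩,
    fun t pfx => (hκ t pfx).1, fun t pfx => (hκ t pfx).2,
    fun t pfx => (hη t pfx).1, fun t pfx => (hη t pfx).2,
    fun t pfx => zeroOneLoss_le_of_forall_le (kernelQ_le_zero hδh t pfx),
    fun t pfx => zeroOneLoss_le_of_forall_le (kernelP_le_policyP hδh t pfx), ?_⟩
  intro P Q Δ v VT KL hP hQ hΔ hv hVT hKL
  obtain rfl : P = pathProb (kernelP δ) := funext hP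
  obtain rfl : Q = pathProb (kernelQ δ) := funext hQ
  obtain rfl : v = fun x t => tvDist (kernelP δ t (prefixAt x t)) (kernelQ δ t (prefixAt x t)) :=
    funext₂ hv
  have hVTδ : VT ≤ δ ^ (1 : ℝ) := by
    rw [rpow_one, hVT]
    exact sum_pathProb_mul_avg_tvDist_le hδ0.le hδ1.le
  have hKLδ : sqrt (KL / (n + 1 : ℕ)) ≤ δ ^ (1 / 2 : ℝ) := by
    rw [← sqrt_eq_rpow, hKL]
    exact sqrt_le_sqrt ((div_le_iff₀ (by positivity)).2 (sum_pathProb_mul_log_le hδ0))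
  have hregret : 3 / 4 ≤ Δ trapPath := by
    rw [hΔ]
    refine averageRegret_trapPath.ge.trans' ((le_div_iff₀ (by positivity)).2 ?_)
    linarith [show (3 : ℝ) ≤ n by exact_mod_cast hn]
  refine (single_le_sum (fun x _ => pathProb_nonneg (fun t pfx => (hκ t pfx).1) x)
    (mem_filter.2 ⟨mem_univ trapPath, ?_, ?_⟩)).trans' pathProb_kernelP_trapPath.ge
  · linarith [mul_mul_rpow_neg_le (b := α) hC.le hδ0 hVTδ]
  · linarith [mul_mul_rpow_neg_le (b := β) hC.le hδ0 hKLδ]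

/-- Theorem 4 (impossibility result): for every `C > 0`, `α ∈ [0,1)`,
`β ∈ [0,1/2)` and every vanishing error term `ε(T,δ)`, there is a prediction
problem on `{0,1,2}` with classification loss, a distribution `Q` (given by
kernels `η`), a `Q`-optimal policy `bQ`, a `P`-optimal comparator `bP` and
`δ ∈ (0,1)` such that with probability at least `δ` under `P`, the average
per-round regret satisfies both
`Δ ≥ C·V_T·δ^{−α} + ε(T,δ)` and `Δ ≥ C·sqrt(KL(P‖Q)/T)·δ^{−β} + ε(T,δ)`. -/
theorem stmt_18 (C : ℝ) (hC : 0 < C) (α β : ℝ)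
    (hα : α ∈ Set.Ico (0 : ℝ) 1) (hβ : β ∈ Set.Ico (0 : ℝ) (1 / 2))
    (ε : ℕ → ℝ → ℝ) (hε0 : ∀ T δ, 0 ≤ ε T δ)
    (hεlim : ∀ δ ∈ Set.Ioc (0 : ℝ) 1,
      Filter.Tendsto (fun T => ε T δ) Filter.atTop (nhds 0)) :
    ∃ (T : ℕ) (_ : 0 < T)
      (κ η : (t : Fin T) → (Fin t.val → Fin 3) → Fin 3 → ℝ)
      (bQ bP : (t : Fin T) → (Fin t.val → Fin 3) → Fin 3)
      (δ : ℝ), δ ∈ Set.Ioo (0 : ℝ) 1 ∧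
      -- `κ` and `η` are Markov kernels
      (∀ t pfx z, 0 ≤ κ t pfx z) ∧ (∀ t pfx, ∑ z, κ t pfx z = 1) ∧
      (∀ t pfx z, 0 ≤ η t pfx z) ∧ (∀ t pfx, ∑ z, η t pfx z = 1) ∧
      -- `bQ` is Bayes optimal for `Q`, `bP` is Bayes optimal for `P` (classification loss)
      (∀ t pfx b', ∑ z, η t pfx z * (if bQ t pfx = z then (0 : ℝ) else 1) ≤
        ∑ z, η t pfx z * (if b' = z then (0 : ℝ) else 1)) ∧
      (∀ t pfx b', ∑ z, κ t pfx z * (if bP t pfx = z then (0 : ℝ) else 1) ≤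
        ∑ z, κ t pfx z * (if b' = z then (0 : ℝ) else 1)) ∧
      -- for `P`, `Q`, `Δ`, `V_T` and `KL` defined from the kernels and policies as usual,
      -- both regret lower bounds hold simultaneously with `P`-probability at least `δ`
      (∀ (P Q : (Fin T → Fin 3) → ℝ) (Δ : (Fin T → Fin 3) → ℝ)
          (v : (Fin T → Fin 3) → Fin T → ℝ) (VT KL : ℝ),
        (∀ x, P x = ∏ t, κ t (fun i => x ⟨i.val, i.isLt.trans t.isLt⟩) (x t)) →
        (∀ x, Q x = ∏ t, η t (fun i => x ⟨i.val, i.isLt.trans t.isLt⟩) (x t)) →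
        (∀ x, Δ x = (1 / (T : ℝ)) * ∑ t,
          ((if bQ t (fun i => x ⟨i.val, i.isLt.trans t.isLt⟩) = x t then (0 : ℝ) else 1)
            - (if bP t (fun i => x ⟨i.val, i.isLt.trans t.isLt⟩) = x t then (0 : ℝ) else 1))) →
        (∀ x t, v x t = (1 / 2) * ∑ z,
          |κ t (fun i => x ⟨i.val, i.isLt.trans t.isLt⟩) z
            - η t (fun i => x ⟨i.val, i.isLt.trans t.isLt⟩) z|) →
        VT = (∑ x, P x * ((1 / (T : ℝ)) * ∑ t, v x t)) →
        KL = (∑ x, P x * Real.log (P x / Q x)) →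
        δ ≤ ∑ x ∈ Finset.univ.filter (fun x : Fin T → Fin 3 =>
            C * VT * δ ^ (-α) + ε T δ ≤ Δ x ∧
            C * Real.sqrt (KL / T) * δ ^ (-β) + ε T δ ≤ Δ x), P x) :=
  stmt_18_general C hC α β hα hβ ε hεlim
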